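/- Let {C_1,…,C_M} be an (M,L)-CCC, let P be a positive divisor of M, let b^1,…,b^P be unimodular MOSs of length P, and let n_1,…,n_{P+1} be nonnegative integers with sum n. For 0 ≤ ν < M/P and 1 ≤ μ ≤ P define B_{νP+μ} = R(C_{νP+1}, C_{νP+2}, …, C_{(ν+1)P}; b^μ). Then {B_1,…,B_M} is an (M, PL+n) SNC-CCC; that is, for all 1 ≤ t_1, t_2 ≤ M and all integers τ: C(B_{t_1}, B_{t_2})(τ) = 0 whenever t_1 ≠ t_2 or τ ≠ 0, and C(B_t, B_t)(0) = M·P·L for every t. -/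

import Mathlib

open scoped BigOperators ComplexConjugate

noncomputable section

/-- Zero-extension of a finite complex sequence to an integer-indexed sequence. -/
def zext {L : ℕ} (a : Fin L → ℂ) (i : ℤ) : ℂ :=
  if h : 0 ≤ i ∧ i < (L : ℤ) then a ⟨i.toNat, by omega⟩ else 0

/-- Aperiodic cross-correlation function (ACCF) of two length-`L` complex sequences. -/
def accf {L : ℕ} (a b : Fin L → ℂ) (τ : ℤ) : ℂ :=
  ∑ i : Fin L, zext a ((i : ℤ) + τ) * conj (b i)

/-- Periodic cross-correlation function of two length-`N` complex sequences. -/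
def pccf {N : ℕ} (a b : Fin N → ℂ) (τ : ℤ) : ℂ :=
  accf a b τ + accf a b (τ - (N : ℤ))

/-- ACCF of two `M × L` codes (sum of row-wise ACCFs). -/
def codeACCF {M L : ℕ} (C D : Fin M → Fin L → ℂ) (τ : ℤ) : ℂ :=
  ∑ ν : Fin M, accf (C ν) (D ν) τ

/-- Periodic cross-correlation of two `M × N` codes. -/
def codePCCF {M N : ℕ} (C D : Fin M → Fin N → ℂ) (τ : ℤ) : ℂ :=
  ∑ ν : Fin M, pccf (C ν) (D ν) τ

/-- `C : Fin M → (Fin M → Fin L → ℂ)` is an `(M,L)`-CCC. -/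
def IsCCC {M L : ℕ} (C : Fin M → Fin M → Fin L → ℂ) : Prop :=
  (∀ k₁ k₂ : Fin M, ∀ τ : ℤ, (k₁ ≠ k₂ ∨ τ ≠ 0) → codeACCF (C k₁) (C k₂) τ = 0) ∧
  (∀ k : Fin M, codeACCF (C k) (C k) 0 = (M : ℂ) * (L : ℂ))

/-- Starting column of the `p`-th data block in the construction `R`:
the block `b_{p+1}·C_{p+1}` starts after the zero blocks `n_1, …, n_{p+1}` and the
previous `p` data blocks of width `L`. -/
def Roff {P : ℕ} (L : ℕ) (n : Fin (P + 1) → ℕ) (p : Fin P) : ℕ :=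
  (∑ i : Fin (P + 1), if (i : ℕ) ≤ (p : ℕ) then n i else 0) + (p : ℕ) * L

/-- The construction
`R(C_1,…,C_P; b) = [0^{n_1} ∥ b_1·C_1 ∥ 0^{n_2} ∥ b_2·C_2 ∥ … ∥ 0^{n_P} ∥ b_P·C_P ∥ 0^{n_{P+1}}]`,
an `M × (P·L + n)` matrix.  (The data blocks are pairwise disjoint, so the column `x` entry
is `b_p · (C_p)_{r,j}` if `x = Roff p + j` for (the unique) such `p, j`, and `0` otherwise.) -/
def Rmat {M L P : ℕ} (Cs : Fin P → Fin M → Fin L → ℂ) (b : Fin P → ℂ)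
    (n : Fin (P + 1) → ℕ) : Fin M → Fin (P * L + ∑ i, n i) → ℂ :=
  fun r x => ∑ p : Fin P, ∑ j : Fin L,
    if (x : ℕ) = Roff L n p + (j : ℕ) then b p * Cs p r j else 0

/-- For `t = νP + μ` (0-indexed), the index `νP + p` of the `p`-th constituent code. -/
def blockIdx {M P : ℕ} (hP : P ∣ M) (t : Fin M) (p : Fin P) : Fin M :=
  ⟨(t : ℕ) / P * P + (p : ℕ), by
    obtain ⟨k, rfl⟩ := hP
    have hPpos : 0 < P := p.pos
    have h1 : (t : ℕ) / P < k := Nat.div_lt_of_lt_mul t.isLt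
    have h4 : (p : ℕ) < P := p.isLt
    nlinarith [h1, h4]⟩

/-- Condition (13) of the paper: for `j₁ ≠ j₂`, `π_{j₁}(i₁P+μ) ≠ π_{j₂}(i₂P+μ)`;
equivalently, images of indices with the same residue mod `P` differ. -/
def Cond13 {M P : ℕ} (π : Fin P → Equiv.Perm (Fin M)) : Prop :=
  ∀ j₁ j₂ : Fin P, j₁ ≠ j₂ → ∀ s t : Fin M, (s : ℕ) % P = (t : ℕ) % P →
    π j₁ s ≠ π j₂ t

/-- Condition (14) of the paper: if `π_{j₁}(i₁P+μ₁) = π_{j₂}(i₂P+μ₂)` for `j₁ ≠ j₂`, then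
`π_{j₁}(i₁P+μ₁+α) ≠ π_{j₂}(i₂P+μ₂+α)` for every nonzero shift `α` keeping both positions
inside their blocks. -/
def Cond14 {M P : ℕ} (π : Fin P → Equiv.Perm (Fin M)) : Prop :=
  ∀ j₁ j₂ : Fin P, j₁ ≠ j₂ → ∀ s t : Fin M, π j₁ s = π j₂ t →
    ∀ α : ℤ, α ≠ 0 →
      0 ≤ ((s : ℕ) : ℤ) % (P : ℤ) + α → ((s : ℕ) : ℤ) % (P : ℤ) + α < (P : ℤ) →
      0 ≤ ((t : ℕ) : ℤ) % (P : ℤ) + α → ((t : ℕ) : ℤ) % (P : ℤ) + α < (P : ℤ) →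
      ∀ s' t' : Fin M, ((s' : ℕ) : ℤ) = ((s : ℕ) : ℤ) + α → ((t' : ℕ) : ℤ) = ((t : ℕ) : ℤ) + α →
        π j₁ s' ≠ π j₂ t'



lemma zext_eq_sum {L : ℕ} (a : Fin L → ℂ) (y : ℤ) :
    zext a y = ∑ j : Fin L, if y = ((j : ℕ) : ℤ) then a j else 0 := by
  unfold zext
  by_cases h : 0 ≤ y ∧ y < (L : ℤ)
  · rw [dif_pos h]
    have hy : y.toNat < L := by omega
    rw [Finset.sum_eq_single (⟨y.toNat, hy⟩ : Fin L)]
    · rw [if_pos (show y = (((⟨y.toNat, hy⟩ : Fin L) : ℕ) : ℤ) by rw [Fin.val_mk]; omega)]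
    · intro j _ hj
      rw [if_neg]
      intro hyj
      exact hj (Fin.ext (show (j : ℕ) = y.toNat by omega))
    · intro h'; exact absurd (Finset.mem_univ _) h'
  · rw [dif_neg h]
    symm
    apply Finset.sum_eq_zero
    intro j _
    rw [if_neg]
    have := j.isLt
    omega

lemma sumCollapse {N : ℕ} (c : Fin N → Prop) [DecidablePred c] (f : Fin N → ℂ)
    (m : ℕ) (hm : m < N) :
    (∑ x : Fin N, if c x ∧ (x : ℕ) = m then f x else 0)
      = if c ⟨m, hm⟩ then f ⟨m, hm⟩ else 0 := by
  rw [Finset.sum_eq_single (⟨m, hm⟩ : Fin N)]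
  · simp
  · intro x _ hx
    rw [if_neg]
    rintro ⟨_, h2⟩
    exact hx (Fin.ext h2)
  · intro h'; exact absurd (Finset.mem_univ _) h'

lemma sumCollapse' {N : ℕ} (c : Fin N → Prop) [DecidablePred c] (f : Fin N → ℂ)
    (m : ℕ) (hm : m < N) :
    (∑ x : Fin N, if (x : ℕ) = m ∧ c x then f x else 0)
      = if c ⟨m, hm⟩ then f ⟨m, hm⟩ else 0 := by
  rw [Finset.sum_eq_single (⟨m, hm⟩ : Fin N)]
  · simp
  · intro x _ hx
    rw [if_neg]
    rintro ⟨h1, _⟩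
    exact hx (Fin.ext h1)
  · intro h'; exact absurd (Finset.mem_univ _) h'

lemma Roff_add_lt {P L : ℕ} (n : Fin (P + 1) → ℕ) (p : Fin P) (j : Fin L) :
    Roff L n p + (j : ℕ) < P * L + ∑ i, n i := by
  unfold Roff
  have h1 : (∑ i : Fin (P + 1), if (i : ℕ) ≤ (p : ℕ) then n i else 0) ≤ ∑ i, n i :=
    Finset.sum_le_sum (fun i _ => by split <;> simp)
  have h2 : (p : ℕ) * L + (j : ℕ) < P * L := by
    have hp := p.isLt
    have hj := j.isLt
    calc (p : ℕ) * L + (j : ℕ) < (p : ℕ) * L + L := by omega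
      _ = ((p : ℕ) + 1) * L := by ring
      _ ≤ P * L := Nat.mul_le_mul_right _ (by omega)
  omega

lemma zext_Rmat {M L P : ℕ} (Cs : Fin P → Fin M → Fin L → ℂ) (b : Fin P → ℂ)
    (n : Fin (P + 1) → ℕ) (r : Fin M) (y : ℤ) :
    zext (Rmat Cs b n r) y
      = ∑ p : Fin P, ∑ j : Fin L,
          if y = ((Roff L n p + (j : ℕ) : ℕ) : ℤ) then b p * Cs p r j else 0 := by
  rw [zext_eq_sum]
  unfold Rmat
  have step : ∀ x : Fin (P * L + ∑ i, n i),
      (if y = ((x : ℕ) : ℤ) then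
          (∑ p : Fin P, ∑ j : Fin L,
            if (x : ℕ) = Roff L n p + (j : ℕ) then b p * Cs p r j else 0)
        else 0)
      = ∑ p : Fin P, ∑ j : Fin L,
          if (y = ((x : ℕ) : ℤ)) ∧ (x : ℕ) = Roff L n p + (j : ℕ) then b p * Cs p r j
          else 0 := by
    intro x
    split
    · next h =>
        refine Finset.sum_congr rfl fun p _ => Finset.sum_congr rfl fun j _ => ?_
        rw [if_congr (Iff.symm (and_iff_right h)) rfl rfl]
    · next h =>
        refine (Finset.sum_eq_zero fun p _ => Finset.sum_eq_zero fun j _ => ?_).symm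
        rw [if_neg (fun hc => h hc.1)]
  simp only [step]
  rw [Finset.sum_comm]
  refine Finset.sum_congr rfl fun p _ => ?_
  rw [Finset.sum_comm]
  refine Finset.sum_congr rfl fun j _ => ?_
  rw [sumCollapse (fun x => y = ((x : ℕ) : ℤ)) _ _ (Roff_add_lt n p j)]

lemma accf_Rmat {M L P : ℕ} (Cs1 Cs2 : Fin P → Fin M → Fin L → ℂ) (b1 b2 : Fin P → ℂ)
    (n : Fin (P + 1) → ℕ) (r : Fin M) (τ : ℤ) :
    accf (Rmat Cs1 b1 n r) (Rmat Cs2 b2 n r) τ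
      = ∑ p1 : Fin P, ∑ p2 : Fin P, b1 p1 * conj (b2 p2) *
          accf (Cs1 p1 r) (Cs2 p2 r)
            (τ + ((Roff L n p2 : ℕ) : ℤ) - ((Roff L n p1 : ℕ) : ℤ)) := by
  unfold accf
  have e1 : ∀ x : Fin (P * L + ∑ i, n i),
      zext (Rmat Cs1 b1 n r) ((x : ℤ) + τ) * conj (Rmat Cs2 b2 n r x)
      = ∑ p1 : Fin P, ∑ p2 : Fin P, ∑ j1 : Fin L, ∑ j2 : Fin L,
          if ((x : ℕ) = Roff L n p2 + (j2 : ℕ) ∧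
              (((x : ℕ) : ℤ) + τ = ((Roff L n p1 + (j1 : ℕ) : ℕ) : ℤ)))
          then (b1 p1 * Cs1 p1 r j1) * (conj (b2 p2) * conj (Cs2 p2 r j2)) else 0 := by
    intro x
    rw [zext_Rmat]
    have hconj : conj (Rmat Cs2 b2 n r x)
        = ∑ p2 : Fin P, ∑ j2 : Fin L,
            if (x : ℕ) = Roff L n p2 + (j2 : ℕ) then conj (b2 p2) * conj (Cs2 p2 r j2)
            else 0 := by
      unfold Rmat
      rw [map_sum]
      refine Finset.sum_congr rfl fun p2 _ => ?_
      rw [map_sum]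
      refine Finset.sum_congr rfl fun j2 _ => ?_
      rw [apply_ite (starRingEnd ℂ), map_mul, map_zero]
    rw [hconj, Finset.sum_mul_sum]
    refine Finset.sum_congr rfl fun p1 _ => Finset.sum_congr rfl fun p2 _ => ?_
    rw [Finset.sum_mul_sum]
    refine Finset.sum_congr rfl fun j1 _ => Finset.sum_congr rfl fun j2 _ => ?_
    simp only [ite_mul, mul_ite, zero_mul, mul_zero, ← ite_and]
  simp only [e1]
  rw [Finset.sum_comm]
  refine Finset.sum_congr rfl fun p1 _ => ?_
  rw [Finset.sum_comm]
  refine Finset.sum_congr rfl fun p2 _ => ?_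
  rw [Finset.sum_comm]
  refine Eq.trans (Finset.sum_congr rfl fun j1 _ => Finset.sum_comm) ?_
  refine Eq.trans (Finset.sum_congr rfl fun j1 _ => Finset.sum_congr rfl fun j2 _ =>
    sumCollapse' _ _ _ (Roff_add_lt n p2 j2)) ?_
  rw [Finset.sum_comm]
  rw [Finset.mul_sum]
  refine Finset.sum_congr rfl fun j2 _ => ?_
  rw [zext_eq_sum, Finset.sum_mul, Finset.mul_sum]
  refine Finset.sum_congr rfl fun j1 _ => ?_
  simp only [ite_mul, mul_ite, zero_mul, mul_zero]
  exact if_congr (by rw [Fin.val_mk]; push_cast; omega) (by ring) rfl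

lemma codeACCF_Rmat {M L P : ℕ} (Cs1 Cs2 : Fin P → Fin M → Fin L → ℂ) (b1 b2 : Fin P → ℂ)
    (n : Fin (P + 1) → ℕ) (τ : ℤ) :
    codeACCF (Rmat Cs1 b1 n) (Rmat Cs2 b2 n) τ
      = ∑ p1 : Fin P, ∑ p2 : Fin P, b1 p1 * conj (b2 p2) *
          codeACCF (Cs1 p1) (Cs2 p2)
            (τ + ((Roff L n p2 : ℕ) : ℤ) - ((Roff L n p1 : ℕ) : ℤ)) := by
  unfold codeACCF
  simp only [accf_Rmat]
  rw [Finset.sum_comm]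
  refine Finset.sum_congr rfl fun p1 _ => ?_
  rw [Finset.sum_comm]
  refine Finset.sum_congr rfl fun p2 _ => ?_
  rw [Finset.mul_sum]

lemma blockIdx_eq_iff {M P : ℕ} (hPpos : 0 < P) (hP : P ∣ M) (t1 t2 : Fin M) (p1 p2 : Fin P) :
    blockIdx hP t1 p1 = blockIdx hP t2 p2 ↔ ((t1 : ℕ) / P = (t2 : ℕ) / P ∧ p1 = p2) := by
  constructor
  · intro h
    have hv : (t1 : ℕ) / P * P + (p1 : ℕ) = (t2 : ℕ) / P * P + (p2 : ℕ) := congrArg Fin.val h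
    have e1 : ((p1 : ℕ) + (t1 : ℕ) / P * P) % P = (p1 : ℕ) % P :=
      Nat.add_mul_mod_self_right _ _ _
    have e2 : ((p2 : ℕ) + (t2 : ℕ) / P * P) % P = (p2 : ℕ) % P :=
      Nat.add_mul_mod_self_right _ _ _
    rw [Nat.mod_eq_of_lt p1.isLt] at e1
    rw [Nat.mod_eq_of_lt p2.isLt] at e2
    have hv' : (p1 : ℕ) + (t1 : ℕ) / P * P = (p2 : ℕ) + (t2 : ℕ) / P * P := by omega
    have hp : (p1 : ℕ) = (p2 : ℕ) := by rw [← e1, hv', e2]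
    refine ⟨Nat.eq_of_mul_eq_mul_right hPpos (by omega), Fin.ext hp⟩
  · rintro ⟨hq, rfl⟩
    exact Fin.ext (by simp [blockIdx, hq])

/-- Theorem 1: `{B_1,…,B_M}` built by
`B_{νP+μ} = R(C_{νP+1},…,C_{(ν+1)P}; b^μ)` from an `(M,L)`-CCC and unimodular MOSs
is an `(M, PL+n)` SNC-CCC: all cross- and auto-correlations vanish except the in-phase
auto-correlation, which equals `M·P·L`.  (0-indexed: `t = νP+μ₀` with `ν = t/P`,
`μ₀ = t%P`.) -/
theorem snc_ccc_construction {M L P : ℕ} (hPpos : 0 < P) (hP : P ∣ M)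
    (C : Fin M → Fin M → Fin L → ℂ) (hC : IsCCC C)
    (bs : Fin P → Fin P → ℂ)
    (hMOS : ∀ μ₁ μ₂ : Fin P, μ₁ ≠ μ₂ → ∑ i : Fin P, bs μ₁ i * conj (bs μ₂ i) = 0)
    (hUni : ∀ μ i : Fin P, ‖bs μ i‖ = 1)
    (n : Fin (P + 1) → ℕ)
    (Bc : Fin M → Fin M → Fin (P * L + ∑ i, n i) → ℂ)
    (hB : ∀ t : Fin M,
      Bc t = Rmat (fun p => C (blockIdx hP t p)) (bs ⟨(t : ℕ) % P, Nat.mod_lt _ hPpos⟩) n) :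
    (∀ t₁ t₂ : Fin M, ∀ τ : ℤ, (t₁ ≠ t₂ ∨ τ ≠ 0) → codeACCF (Bc t₁) (Bc t₂) τ = 0) ∧
    (∀ t : Fin M, codeACCF (Bc t) (Bc t) 0 = (M : ℂ) * (P : ℂ) * (L : ℂ)) := by
  have key : ∀ t1 t2 : Fin M, ∀ τ : ℤ,
      codeACCF (Bc t1) (Bc t2) τ
        = ∑ p1 : Fin P, ∑ p2 : Fin P,
            bs ⟨(t1 : ℕ) % P, Nat.mod_lt _ hPpos⟩ p1 *
              conj (bs ⟨(t2 : ℕ) % P, Nat.mod_lt _ hPpos⟩ p2) *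
              codeACCF (C (blockIdx hP t1 p1)) (C (blockIdx hP t2 p2))
                (τ + ((Roff L n p2 : ℕ) : ℤ) - ((Roff L n p1 : ℕ) : ℤ)) := by
    intro t1 t2 τ
    rw [hB t1, hB t2, codeACCF_Rmat]
  have diag : ∀ t1 t2 : Fin M, (t1 : ℕ) / P = (t2 : ℕ) / P →
      codeACCF (Bc t1) (Bc t2) 0
        = (∑ p : Fin P, bs ⟨(t1 : ℕ) % P, Nat.mod_lt _ hPpos⟩ p *
            conj (bs ⟨(t2 : ℕ) % P, Nat.mod_lt _ hPpos⟩ p)) * ((M : ℂ) * (L : ℂ)) := by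
    intro t1 t2 hq
    rw [key, Finset.sum_mul]
    refine Finset.sum_congr rfl fun p1 _ => ?_
    rw [Finset.sum_eq_single p1]
    · have hk : blockIdx hP t1 p1 = blockIdx hP t2 p1 :=
        (blockIdx_eq_iff hPpos hP t1 t2 p1 p1).mpr ⟨hq, rfl⟩
      have hsh : (0 : ℤ) + ((Roff L n p1 : ℕ) : ℤ) - ((Roff L n p1 : ℕ) : ℤ) = 0 := by ring
      rw [hsh, hk, hC.2]
    · intro p2 _ hne
      have hk : blockIdx hP t1 p1 ≠ blockIdx hP t2 p2 := fun hk =>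
        hne (((blockIdx_eq_iff hPpos hP t1 t2 p1 p2).mp hk).2.symm)
      rw [hC.1 _ _ _ (Or.inl hk), mul_zero]
    · intro h'; exact absurd (Finset.mem_univ _) h'
  refine ⟨?_, ?_⟩
  · intro t1 t2 τ h
    by_cases hτ : τ = 0
    · subst hτ
      have ht : t1 ≠ t2 := h.resolve_right (fun hh => hh rfl)
      by_cases hq : (t1 : ℕ) / P = (t2 : ℕ) / P
      · rw [diag t1 t2 hq]
        have hμ : (⟨(t1 : ℕ) % P, Nat.mod_lt _ hPpos⟩ : Fin P)
            ≠ ⟨(t2 : ℕ) % P, Nat.mod_lt _ hPpos⟩ := by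
          intro hmm
          apply ht
          have h1 := Nat.div_add_mod (t1 : ℕ) P
          have h2 := Nat.div_add_mod (t2 : ℕ) P
          have hm : (t1 : ℕ) % P = (t2 : ℕ) % P := congrArg Fin.val hmm
          rw [hq] at h1
          exact Fin.ext (by omega)
        rw [hMOS _ _ hμ, zero_mul]
      · rw [key]
        refine Finset.sum_eq_zero fun p1 _ => Finset.sum_eq_zero fun p2 _ => ?_
        have hk : blockIdx hP t1 p1 ≠ blockIdx hP t2 p2 := fun hk =>
          hq ((blockIdx_eq_iff hPpos hP t1 t2 p1 p2).mp hk).1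
        rw [hC.1 _ _ _ (Or.inl hk), mul_zero]
    · rw [key]
      refine Finset.sum_eq_zero fun p1 _ => Finset.sum_eq_zero fun p2 _ => ?_
      by_cases hk : blockIdx hP t1 p1 = blockIdx hP t2 p2
      · have hp : p1 = p2 := ((blockIdx_eq_iff hPpos hP t1 t2 p1 p2).mp hk).2
        subst hp
        have hsh : τ + ((Roff L n p1 : ℕ) : ℤ) - ((Roff L n p1 : ℕ) : ℤ) = τ := by ring
        rw [hsh, hC.1 _ _ _ (Or.inr hτ), mul_zero]
      · rw [hC.1 _ _ _ (Or.inl hk), mul_zero]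
  · intro t
    rw [diag t t rfl]
    have hone : ∀ p : Fin P,
        bs ⟨(t : ℕ) % P, Nat.mod_lt _ hPpos⟩ p *
          conj (bs ⟨(t : ℕ) % P, Nat.mod_lt _ hPpos⟩ p) = 1 := by
      intro p
      rw [Complex.mul_conj]
      norm_cast
      rw [← Complex.sq_norm, hUni]
      norm_num
    rw [Finset.sum_congr rfl (fun p _ => hone p)]
    simp only [Finset.sum_const, Finset.card_univ, Fintype.card_fin, nsmul_eq_mul, mul_one]
    ring

end
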